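/- For every positive integer m, (π/(2m))⁴ · Σ_{k=1}^{m-1} cos⁻⁴(kπ/(2m)) = (π⁴/90)·(1 + 5/(2m²) − 7/(2m⁴)). -/

import Mathlib

/-!
With `t = tan θ` one has `sin 2mθ = cos^{2m} θ · Im (1 + i t)^{2m} = cos^{2m} θ · t · P_m(t²)`,
where `P_m(u) = ∑_j (-1)^j C(2m, 2j+1) u^j` has degree `m - 1`. Evaluating at the complementary
angles `π/2 - kπ/(2m)` shows that the `m - 1` distinct numbers `cot²(kπ/(2m))`, `1 ≤ k ≤ m - 1`,
are all the roots of `P_m`. Vieta's formulas for the three lowest coefficients `2m`, `-C(2m,3)`,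
`C(2m,5)` then give `∑ tan²(kπ/(2m))` and `∑ tan⁴(kπ/(2m))`, which determine the sum of
`sec⁴ = (1 + tan²)²`.
-/

open Real Finset Polynomial

theorem Finset.sum_range_two_mul {M : Type*} [AddCommMonoid M] (f : ℕ → M) (m : ℕ) :
    ∑ k ∈ range (2 * m), f k = ∑ j ∈ range m, (f (2 * j) + f (2 * j + 1)) := by
  induction m with
  | zero => simp
  | succ m ih =>
    rw [mul_add, mul_one, sum_range_succ, sum_range_succ, sum_range_succ, ih, add_assoc]

namespace Multiset

variable {K : Type*} [Field K]

theorem prod_X_sub_C_coeff_one_eq (s : Multiset K) (hs : (0 : K) ∉ s) :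
    (s.map (X - C ·)).prod.coeff 1 =
      -(s.map (X - C ·)).prod.coeff 0 * (s.map (·⁻¹)).sum := by
  induction s using Multiset.induction_on with
  | empty => simp [coeff_one]
  | cons a s ih =>
    obtain ⟨ha, hs⟩ : a ≠ 0 ∧ 0 ∉ s := by simpa [eq_comm] using hs
    simp only [map_cons, prod_cons, sum_cons, sub_mul, coeff_sub, coeff_C_mul, coeff_X_mul,
      mul_coeff_zero, coeff_X_zero, coeff_C_zero, ih hs]
    linear_combination -(s.map (X - C ·)).prod.coeff 0 * mul_inv_cancel₀ ha

theorem prod_X_sub_C_coeff_two_eq (s : Multiset K) (hs : (0 : K) ∉ s) :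
    2 * (s.map (X - C ·)).prod.coeff 2 =
      (s.map (X - C ·)).prod.coeff 0 * ((s.map (·⁻¹)).sum ^ 2 - (s.map (·⁻¹ ^ 2)).sum) := by
  induction s using Multiset.induction_on with
  | empty => simp [coeff_one]
  | cons a s ih =>
    obtain ⟨ha, hs⟩ : a ≠ 0 ∧ 0 ∉ s := by simpa [eq_comm] using hs
    simp only [map_cons, prod_cons, sum_cons, sub_mul, coeff_sub, coeff_C_mul, coeff_X_mul,
      mul_coeff_zero, coeff_X_zero, coeff_C_zero, prod_X_sub_C_coeff_one_eq s hs]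
    linear_combination (-a) * ih hs +
      2 * (s.map (X - C ·)).prod.coeff 0 * (s.map (·⁻¹)).sum * mul_inv_cancel₀ ha

end Multiset

namespace Polynomial

variable {K : Type*} [Field K] {p : K[X]}

theorem coeff_one_eq_of_card_roots (hroots : p.roots.card = p.natDegree)
    (h0 : (0 : K) ∉ p.roots) : p.coeff 1 = -p.coeff 0 * (p.roots.map (·⁻¹)).sum := by
  have hp := C_leadingCoeff_mul_prod_multiset_X_sub_C hroots
  set q := (p.roots.map (X - C ·)).prod
  calc p.coeff 1 = p.leadingCoeff * q.coeff 1 := by rw [← coeff_C_mul q, hp]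
    _ = -(p.leadingCoeff * q.coeff 0) * (p.roots.map (·⁻¹)).sum := by
      rw [Multiset.prod_X_sub_C_coeff_one_eq _ h0]; ring
    _ = _ := by rw [← coeff_C_mul q, hp]

theorem coeff_two_eq_of_card_roots (hroots : p.roots.card = p.natDegree)
    (h0 : (0 : K) ∉ p.roots) :
    2 * p.coeff 2 =
      p.coeff 0 * ((p.roots.map (·⁻¹)).sum ^ 2 - (p.roots.map (·⁻¹ ^ 2)).sum) := by
  have hp := C_leadingCoeff_mul_prod_multiset_X_sub_C hroots
  set q := (p.roots.map (X - C ·)).prod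
  calc 2 * p.coeff 2 = 2 * (p.leadingCoeff * q.coeff 2) := by rw [← coeff_C_mul q, hp]
    _ = p.leadingCoeff * q.coeff 0 *
        ((p.roots.map (·⁻¹)).sum ^ 2 - (p.roots.map (·⁻¹ ^ 2)).sum) := by
      rw [mul_left_comm, Multiset.prod_X_sub_C_coeff_two_eq _ h0]; ring
    _ = _ := by rw [← coeff_C_mul q, hp]

end Polynomial

theorem Nat.cast_choose_three {K : Type*} [Field K] [CharZero K] (n : ℕ) :
    (n.choose 3 : K) = n * (n - 1) * (n - 2) / 6 := by
  rw [cast_choose_eq_descPochhammer_div]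
  simp [descPochhammer_succ_right, factorial]

theorem Nat.cast_choose_five {K : Type*} [Field K] [CharZero K] (n : ℕ) :
    (n.choose 5 : K) = n * (n - 1) * (n - 2) * (n - 3) * (n - 4) / 120 := by
  rw [cast_choose_eq_descPochhammer_div]
  simp [descPochhammer_succ_right, factorial]

noncomputable def tanSqPoly (m : ℕ) : ℝ[X] :=
  ∑ j ∈ range m, C ((-1) ^ j * ((2 * m).choose (2 * j + 1) : ℝ)) * X ^ j

theorem tanSqPoly_coeff (m j : ℕ) :
    (tanSqPoly m).coeff j = (-1) ^ j * ((2 * m).choose (2 * j + 1) : ℝ) := by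
  rw [tanSqPoly, finsetSum_coeff]
  simp only [coeff_C_mul_X_pow, sum_ite_eq, mem_range]
  split_ifs with hj
  · rfl
  · rw [Nat.choose_eq_zero_of_lt (by omega), Nat.cast_zero, mul_zero]

theorem tanSqPoly_natDegree {m : ℕ} (hm : 0 < m) : (tanSqPoly m).natDegree = m - 1 := by
  refine natDegree_eq_of_le_of_coeff_ne_zero ?_ ?_
  · refine natDegree_le_iff_coeff_eq_zero.mpr fun j hj => ?_
    rw [tanSqPoly_coeff, Nat.choose_eq_zero_of_lt (by omega), Nat.cast_zero, mul_zero]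
  · rw [tanSqPoly_coeff]
    have : 0 < (2 * m).choose (2 * (m - 1) + 1) := Nat.choose_pos (by omega)
    positivity

theorem im_one_add_mul_I_pow_two_mul (m : ℕ) (t : ℝ) :
    ((1 + t * Complex.I) ^ (2 * m)).im = t * (tanSqPoly m).eval (t ^ 2) := by
  have heven : ∀ j, ((t : ℂ) * Complex.I) ^ (2 * j) = ((-t ^ 2) ^ j : ℝ) := by
    intro j; push_cast; rw [pow_mul, mul_pow, Complex.I_sq]; ring
  rw [add_comm, add_pow, Complex.im_sum, sum_range_succ, sum_range_two_mul, tanSqPoly,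
    eval_finsetSum, mul_sum]
  simp only [one_pow, mul_one, pow_succ _ (2 * _), heven, ← Complex.ofReal_natCast,
    ← Complex.ofReal_mul, Complex.ofReal_im, Complex.mul_im, Complex.ofReal_re, Complex.I_re,
    Complex.I_im, Complex.mul_re, eval_mul, eval_C, eval_pow, eval_X]
  exact (add_zero _).trans (sum_congr rfl fun j _ => by ring)

theorem sin_two_mul_nat_mul_eq (m : ℕ) {θ : ℝ} (hθ : cos θ ≠ 0) :
    sin (2 * m * θ) = cos θ ^ (2 * m) * (tan θ * (tanSqPoly m).eval (tan θ ^ 2)) := by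
  have hpolar : Complex.exp (θ * Complex.I) = cos θ * (1 + tan θ * Complex.I) := by
    have hc : (cos θ : ℂ) ≠ 0 := Complex.ofReal_ne_zero.mpr hθ
    rw [Complex.exp_mul_I, tan_eq_sin_div_cos]
    push_cast at hc ⊢
    field_simp
  rw [← im_one_add_mul_I_pow_two_mul, ← Complex.im_ofReal_mul, Complex.ofReal_pow, ← mul_pow,
    ← hpolar, ← Complex.exp_nat_mul, ← Complex.exp_ofReal_mul_I_im]
  push_cast
  ring_nf

theorem tanSqPoly_eval_tan_sq_eq_zero (m : ℕ) {θ : ℝ} (hcos : cos θ ≠ 0) (hsin : sin θ ≠ 0)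
    (h : sin (2 * m * θ) = 0) : (tanSqPoly m).eval (tan θ ^ 2) = 0 := by
  rw [sin_two_mul_nat_mul_eq m hcos] at h
  have htan : tan θ ≠ 0 := by rw [tan_eq_sin_div_cos]; exact div_ne_zero hsin hcos
  simpa [hcos, htan] using h

theorem mul_pi_div_two_mul_mem_Ioo {m k : ℕ} (hk : k ∈ Icc 1 (m - 1)) :
    k * π / (2 * m) ∈ Set.Ioo 0 (π / 2) := by
  rw [mem_Icc] at hk
  have hk1 : (1 : ℝ) ≤ k := by exact_mod_cast hk.1
  have hkm : (k : ℝ) + 1 ≤ m := by exact_mod_cast (by omega : k + 1 ≤ m)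
  have hm : (0 : ℝ) < m := by linarith
  constructor
  · positivity
  · rw [div_lt_div_iff₀ (by positivity) two_pos]
    nlinarith [pi_pos]

theorem injOn_inv_tan_sq (m : ℕ) :
    Set.InjOn (fun k : ℕ => (tan (k * π / (2 * m)))⁻¹ ^ 2) (Icc 1 (m - 1)) := by
  intro j hj k hk h
  have ⟨hj0, hjπ⟩ := mul_pi_div_two_mul_mem_Ioo hj
  have ⟨hk0, hkπ⟩ := mul_pi_div_two_mul_mem_Ioo hk
  have htj := tan_pos_of_pos_of_lt_pi_div_two hj0 hjπ
  have htk := tan_pos_of_pos_of_lt_pi_div_two hk0 hkπ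
  simp only at h
  rw [pow_left_inj₀ (by positivity) (by positivity) two_ne_zero, inv_inj] at h
  have := injOn_tan ⟨by linarith, hjπ⟩ ⟨by linarith, hkπ⟩ h
  have hm : (m : ℝ) ≠ 0 := by rintro h; simp [h] at hj0
  field_simp at this
  exact_mod_cast this

theorem tanSqPoly_roots {m : ℕ} (hm : 0 < m) :
    (tanSqPoly m).roots =
      ((Icc 1 (m - 1)).image fun k : ℕ => (tan (k * π / (2 * m)))⁻¹ ^ 2).val := by
  refine roots_eq_of_natDegree_le_card_of_ne_zero ?_ ?_ ?_
  · simp only [mem_image]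
    rintro _ ⟨k, hk, rfl⟩
    have ⟨h0, hπ⟩ := mul_pi_div_two_mul_mem_Ioo hk
    rw [← tan_pi_div_two_sub]
    refine tanSqPoly_eval_tan_sq_eq_zero m ?_ ?_ ?_
    · rw [cos_pi_div_two_sub]; exact (sin_pos_of_pos_of_lt_pi h0 (by linarith)).ne'
    · rw [sin_pi_div_two_sub]; exact (cos_pos_of_mem_Ioo ⟨by linarith, hπ⟩).ne'
    · have hkm : k ≤ m := by rw [mem_Icc] at hk; omega
      rw [show 2 * m * (π / 2 - k * π / (2 * m)) = ((m - k : ℕ) : ℝ) * π by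
        rw [Nat.cast_sub hkm]; field_simp]
      exact sin_nat_mul_pi _
  · rw [tanSqPoly_natDegree hm, card_image_of_injOn (injOn_inv_tan_sq m), Nat.card_Icc]
    omega
  · intro h
    simpa [h, hm.ne'] using tanSqPoly_coeff m 0

theorem sum_map_tanSqPoly_roots {m : ℕ} (hm : 0 < m) (f : ℝ → ℝ) :
    ((tanSqPoly m).roots.map f).sum =
      ∑ k ∈ Icc 1 (m - 1), f ((tan (k * π / (2 * m)))⁻¹ ^ 2) := by
  rw [tanSqPoly_roots hm, sum_map_val, sum_image (injOn_inv_tan_sq m)]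

theorem tanSqPoly_card_roots {m : ℕ} (hm : 0 < m) :
    (tanSqPoly m).roots.card = (tanSqPoly m).natDegree := by
  rw [tanSqPoly_roots hm, tanSqPoly_natDegree hm, card_val,
    card_image_of_injOn (injOn_inv_tan_sq m), Nat.card_Icc, Nat.add_sub_cancel]

theorem zero_notMem_tanSqPoly_roots {m : ℕ} (hm : 0 < m) : (0 : ℝ) ∉ (tanSqPoly m).roots := by
  rw [tanSqPoly_roots hm, mem_val, mem_image]
  rintro ⟨k, hk, h⟩
  have ⟨h0, hπ⟩ := mul_pi_div_two_mul_mem_Ioo hk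
  have := tan_pos_of_pos_of_lt_pi_div_two h0 hπ
  exact (by positivity : (0 : ℝ) < (tan (k * π / (2 * m)))⁻¹ ^ 2).ne' h

theorem sum_tan_sq {m : ℕ} (hm : 0 < m) :
    ∑ k ∈ Icc 1 (m - 1), tan (k * π / (2 * m)) ^ 2 = (2 * m - 1) * (m - 1) / 3 := by
  have h := coeff_one_eq_of_card_roots (tanSqPoly_card_roots hm) (zero_notMem_tanSqPoly_roots hm)
  rw [sum_map_tanSqPoly_roots hm, tanSqPoly_coeff, tanSqPoly_coeff] at h
  simp only [mul_zero, zero_add, mul_one, pow_zero, pow_one, one_mul, neg_one_mul,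
    Nat.choose_one_right, Nat.reduceAdd, Nat.cast_choose_three, Nat.cast_mul, Nat.cast_ofNat,
    inv_pow, inv_inv] at h
  refine mul_left_cancel₀ (by positivity : (2 * m : ℝ) ≠ 0) ?_
  linear_combination h

theorem sum_tan_pow_four {m : ℕ} (hm : 0 < m) :
    ∑ k ∈ Icc 1 (m - 1), tan (k * π / (2 * m)) ^ 4 =
      (2 * m - 1) * (m - 1) * (4 * m ^ 2 + 6 * m - 13) / 45 := by
  have h := coeff_two_eq_of_card_roots (tanSqPoly_card_roots hm) (zero_notMem_tanSqPoly_roots hm)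
  rw [sum_map_tanSqPoly_roots hm, sum_map_tanSqPoly_roots hm, tanSqPoly_coeff,
    tanSqPoly_coeff] at h
  simp only [mul_zero, zero_add, pow_zero, one_mul, Nat.choose_one_right, Nat.reduceMul,
    Nat.reduceAdd, Nat.cast_choose_five, Nat.cast_mul, Nat.cast_ofNat, inv_pow, inv_inv, ← pow_mul,
    sum_tan_sq hm] at h
  refine mul_left_cancel₀ (by positivity : (2 * m : ℝ) ≠ 0) ?_
  linear_combination h

theorem sum_inv_cos_pow_four {m : ℕ} (hm : 0 < m) :
    ∑ k ∈ Icc 1 (m - 1), (1 / cos (k * π / (2 * m))) ^ 4 =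
      4 * ((m : ℝ) ^ 2 - 1) * (2 * m ^ 2 + 7) / 45 := by
  have hsec : ∀ k ∈ Icc 1 (m - 1), (1 / cos (k * π / (2 * m))) ^ 4 =
      1 + 2 * tan (k * π / (2 * m)) ^ 2 + tan (k * π / (2 * m)) ^ 4 := by
    intro k hk
    have ⟨h0, hπ⟩ := mul_pi_div_two_mul_mem_Ioo hk
    have hcos := (cos_pos_of_mem_Ioo ⟨by linarith [pi_pos], hπ⟩).ne'
    rw [one_div, inv_pow, show 4 = 2 * 2 from rfl, pow_mul, ← inv_one_add_tan_sq hcos, ← inv_pow,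
      inv_inv]
    ring
  rw [sum_congr rfl hsec, sum_add_distrib, sum_add_distrib, ← mul_sum, sum_tan_sq hm,
    sum_tan_pow_four hm, sum_const, Nat.card_Icc, nsmul_one, Nat.add_sub_cancel, Nat.cast_pred hm]
  ring

theorem gardner_fisher_v2 (m : ℕ) (hm : 0 < m) :
    (π / (2 * m)) ^ 4 * ∑ k ∈ Finset.Icc 1 (m - 1),
      (1 / Real.cos (k * π / (2 * m))) ^ 4 =
    (π ^ 4 / 90) * (1 + 5 / (2 * (m : ℝ) ^ 2) - 7 / (2 * (m : ℝ) ^ 4)) := by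
  rw [sum_inv_cos_pow_four hm]
  field_simp
  ring
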